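/- Consider a feedforward network with L ≥ 2 layers in which all hidden layers have the same width h, the hidden activation σ is either the hyperbolic tangent tanh or the logistic sigmoid t ↦ 1/(1+e^{−t}), and the last layer output is f_θ(x) = tanh(a^L), together with a dataset of m points. Then, on the open set of parameters θ for which f_θ(x_i) ∈ (0,1) for all 1 ≤ i ≤ m, the BCE empirical risk θ ↦ Σ_{i=1}^m [−y_i log f_θ(x_i) − (1−y_i) log(1 − f_θ(x_i))] is a Pfaffian function of format (3(L−2)+7, 1, m((L−1)h+5)). -/

import Mathlib

open MvPolynomial

noncomputable section

/-- A Pfaffian chain of order `ℓ` and degree `α` on an open set `U ⊆ ℝ^ι`: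
real analytic functions whose partial derivatives are polynomials of total degree at most `α`
in the coordinates and the previous chain functions (including itself). -/
def IsPfaffianChain {ι : Type} [Fintype ι] [DecidableEq ι] (ℓ α : ℕ)
    (U : Set (ι → ℝ)) (f : Fin ℓ → (ι → ℝ) → ℝ) : Prop :=
  IsOpen U ∧ 1 ≤ α ∧ (∀ i, AnalyticOnNhd ℝ (f i) U) ∧
    ∀ (i : Fin ℓ) (j : ι), ∃ P : MvPolynomial (ι ⊕ Fin (i.1 + 1)) ℝ, P.totalDegree ≤ α ∧
      ∀ x ∈ U, fderiv ℝ (f i) x (Pi.single j 1) =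
        MvPolynomial.eval (Sum.elim x fun k : Fin (i.1 + 1) => f (Fin.castLE i.isLt k) x) P

/-- `g : ℝ^ι → ℝ` is a Pfaffian function of format `(α, β, ℓ)` on the open set `U`:
it is a polynomial of total degree at most `β` in the coordinates and the functions of a
Pfaffian chain of order `ℓ` and degree `α`. -/
def IsPfaffianWithFormat {ι : Type} [Fintype ι] [DecidableEq ι]
    (U : Set (ι → ℝ)) (g : (ι → ℝ) → ℝ) (α β ℓ : ℕ) : Prop :=
  ∃ f : Fin ℓ → (ι → ℝ) → ℝ, IsPfaffianChain ℓ α U f ∧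
    ∃ Q : MvPolynomial (ι ⊕ Fin ℓ) ℝ, Q.totalDegree ≤ β ∧
      ∀ x ∈ U, g x = MvPolynomial.eval (Sum.elim x fun k => f k x) Q

/-- Index set for the parameters of a feedforward network with `L` layers and widths `n`:
the augmented weight matrix of layer `l+1` (1-based) has shape `n (l+1) × (n l + 1)`,
column `0` being the bias. -/
abbrev ParamIdx (L : ℕ) (n : ℕ → ℕ) : Type :=
  Σ l : Fin L, Fin (n (l.1 + 1)) × Fin (n l.1 + 1)

/-- Entry `(j, i)` of the augmented weight matrix of (1-based) layer `l+1`. -/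
def netWeight {L : ℕ} {n : ℕ → ℕ} (θ : ParamIdx L n → ℝ) (l : ℕ)
    (j : Fin (n (l + 1))) (i : Fin (n l + 1)) : ℝ :=
  if hl : l < L then θ ⟨⟨l, hl⟩, (j, i)⟩ else 0

/-- Augmented layer outputs: `netZ σ θ x l = z^l = (1, σ (a^l))`, with `z^0 = (1, x)`. -/
def netZ {L : ℕ} {n : ℕ → ℕ} (σ : ℝ → ℝ) (θ : ParamIdx L n → ℝ) (x : Fin (n 0) → ℝ) :
    (l : ℕ) → Fin (n l + 1) → ℝ
  | 0 => Fin.cons 1 x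
  | l + 1 => Fin.cons 1 fun j => σ (∑ i, netWeight θ l j i * netZ σ θ x l i)

/-- Preactivations: `netPreact σ θ x l = a^{l+1} = W^{l+1} z^l` (1-based layer `l+1`). -/
def netPreact {L : ℕ} {n : ℕ → ℕ} (σ : ℝ → ℝ) (θ : ParamIdx L n → ℝ) (x : Fin (n 0) → ℝ)
    (l : ℕ) (j : Fin (n (l + 1))) : ℝ :=
  ∑ i, netWeight θ l j i * netZ σ θ x l i

/-- Output of the network with a linear last layer: `a^L` (a scalar, since `n L = 1`). -/
def netOutLin {L : ℕ} {n : ℕ → ℕ} (σ : ℝ → ℝ) (θ : ParamIdx L n → ℝ)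
    (x : Fin (n 0) → ℝ) : ℝ :=
  ∑ j, netPreact σ θ x (L - 1) j

/-- The logistic sigmoid. -/
def logisticFn (t : ℝ) : ℝ := 1 / (1 + Real.exp (-t))

/-!
For each data point, the hidden activations `σ (a^{s+1}_i)` together with `u = tanh a^L`,
`u⁻¹`, `(1 - u)⁻¹`, `log u` and `log (1 - u)` form a Pfaffian chain. Both activations satisfy a
Riccati equation `σ' = A + B σ + C σ²`, so by induction over the layers every partial derivative
of `a^{t+1}` is a polynomial of degree `3t + 1` in `θ` and the activations of the layers `≤ t`,
and the derivative of each of the five output functions is `∂a^L` times a polynomial of degree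
at most `2` in `u`, `u⁻¹`, `(1 - u)⁻¹`. The chains of the `m` data points do not interact, so
their concatenation is a chain of order `m ((L - 1) h + 5)`, in which the loss is linear.
-/

section IsPolyOn

variable {ι κ κ' : Type*} {U : Set (ι → ℝ)} {c : κ → (ι → ℝ) → ℝ} {d d₁ d₂ : ℕ}
  {g g₁ g₂ : (ι → ℝ) → ℝ}

/-- The polynomial condition shared by `IsPfaffianChain` and `IsPfaffianWithFormat`, for an
arbitrary family `c` of functions. -/
def IsPolyOn (U : Set (ι → ℝ)) (c : κ → (ι → ℝ) → ℝ) (d : ℕ) (g : (ι → ℝ) → ℝ) : Prop :=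
  ∃ P : MvPolynomial (ι ⊕ κ) ℝ, P.totalDegree ≤ d ∧
    ∀ θ ∈ U, g θ = eval (Sum.elim θ fun k => c k θ) P

theorem IsPolyOn.mono (hg : IsPolyOn U c d₁ g) (hd : d₁ ≤ d₂) : IsPolyOn U c d₂ g :=
  let ⟨P, hP, he⟩ := hg; ⟨P, hP.trans hd, he⟩

theorem IsPolyOn.congr (hg : IsPolyOn U c d g₁) (h : ∀ θ ∈ U, g₁ θ = g₂ θ) :
    IsPolyOn U c d g₂ :=
  let ⟨P, hP, he⟩ := hg; ⟨P, hP, fun θ hθ => (h θ hθ) ▸ he θ hθ⟩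

theorem isPolyOn_const (r : ℝ) : IsPolyOn U c d fun _ => r :=
  ⟨C r, by simp, by simp⟩

theorem isPolyOn_coord (q : ι) : IsPolyOn U c 1 fun θ => θ q :=
  ⟨X (Sum.inl q), (totalDegree_X _).le, by simp⟩

theorem isPolyOn_apply (k : κ) : IsPolyOn U c 1 (c k) :=
  ⟨X (Sum.inr k), (totalDegree_X _).le, by simp⟩

theorem IsPolyOn.add (h₁ : IsPolyOn U c d g₁) (h₂ : IsPolyOn U c d g₂) :
    IsPolyOn U c d fun θ => g₁ θ + g₂ θ :=
  let ⟨P₁, hP₁, he₁⟩ := h₁; let ⟨P₂, hP₂, he₂⟩ := h₂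
  ⟨P₁ + P₂, (totalDegree_add _ _).trans (max_le hP₁ hP₂),
    fun θ hθ => by simp [he₁ θ hθ, he₂ θ hθ]⟩

theorem IsPolyOn.mul (h₁ : IsPolyOn U c d₁ g₁) (h₂ : IsPolyOn U c d₂ g₂) :
    IsPolyOn U c (d₁ + d₂) fun θ => g₁ θ * g₂ θ :=
  let ⟨P₁, hP₁, he₁⟩ := h₁; let ⟨P₂, hP₂, he₂⟩ := h₂
  ⟨P₁ * P₂, (totalDegree_mul _ _).trans (add_le_add hP₁ hP₂),
    fun θ hθ => by simp [he₁ θ hθ, he₂ θ hθ]⟩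

theorem IsPolyOn.const_mul (r : ℝ) (hg : IsPolyOn U c d g) : IsPolyOn U c d fun θ => r * g θ :=
  by simpa using (isPolyOn_const (d := 0) r).mul hg

theorem IsPolyOn.sub (h₁ : IsPolyOn U c d g₁) (h₂ : IsPolyOn U c d g₂) :
    IsPolyOn U c d fun θ => g₁ θ - g₂ θ :=
  (h₁.add (h₂.const_mul (-1))).congr fun θ _ => by ring

theorem IsPolyOn.quadratic (A B C : ℝ) (hg : IsPolyOn U c 1 g) :
    IsPolyOn U c 2 fun θ => A + B * g θ + C * g θ ^ 2 :=
  ((((isPolyOn_const A).add (hg.const_mul B)).mono one_le_two).add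
    ((hg.mul hg).const_mul C)).congr fun θ _ => by ring

theorem isPolyOn_sum {A : Type*} (s : Finset A) {g : A → (ι → ℝ) → ℝ}
    (hg : ∀ a ∈ s, IsPolyOn U c d (g a)) : IsPolyOn U c d fun θ => ∑ a ∈ s, g a θ := by
  classical
  induction s using Finset.induction_on with
  | empty => simpa using isPolyOn_const (U := U) (c := c) (d := d) 0
  | insert a s ha ih =>
    simpa only [Finset.sum_insert ha] using
      (hg a (s.mem_insert_self a)).add (ih fun b hb => hg b (Finset.mem_insert_of_mem hb))

theorem IsPolyOn.reindex {c' : κ' → (ι → ℝ) → ℝ} (e : κ → κ')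
    (he : ∀ k, ∀ θ ∈ U, c k θ = c' (e k) θ) (hg : IsPolyOn U c d g) : IsPolyOn U c' d g := by
  obtain ⟨P, hP, hgP⟩ := hg
  refine ⟨rename (Sum.map id e) P, (totalDegree_rename_le _ _).trans hP, fun θ hθ => ?_⟩
  rw [hgP θ hθ, eval_rename]
  congr 2
  funext v
  cases v with
  | inl q => rfl
  | inr k => exact he k θ hθ

section Derivatives

variable [Fintype ι] [DecidableEq ι] (j : ι)

theorem IsPolyOn.fderiv_comp {s : (ι → ℝ) → ℝ} {φ : ℝ → ℝ} {φ' : (ι → ℝ) → ℝ}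
    (hs : ∀ θ ∈ U, DifferentiableAt ℝ s θ) (hφ : ∀ θ ∈ U, HasDerivAt φ (φ' θ) (s θ))
    (hφ' : IsPolyOn U c d₁ φ') (hds : IsPolyOn U c d₂ fun θ => fderiv ℝ s θ (Pi.single j 1)) :
    IsPolyOn U c (d₁ + d₂) fun θ => fderiv ℝ (fun θ => φ (s θ)) θ (Pi.single j 1) :=
  (hφ'.mul hds).congr fun θ hθ => by
    rw [show (fun θ => φ (s θ)) = φ ∘ s from rfl,
      ((hφ θ hθ).comp_hasFDerivAt θ (hs θ hθ).hasFDerivAt).fderiv]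
    simp

theorem IsPolyOn.fderiv_comp_riccati {s : (ι → ℝ) → ℝ} {σ : ℝ → ℝ} {A B C : ℝ}
    (hσ : ∀ t, HasDerivAt σ (A + B * σ t + C * σ t ^ 2) t)
    (hs : ∀ θ ∈ U, DifferentiableAt ℝ s θ) (hσs : IsPolyOn U c 1 fun θ => σ (s θ))
    (hds : IsPolyOn U c d fun θ => fderiv ℝ s θ (Pi.single j 1)) :
    IsPolyOn U c (2 + d) fun θ => fderiv ℝ (fun θ => σ (s θ)) θ (Pi.single j 1) :=
  (hσs.quadratic A B C).fderiv_comp j hs (fun θ _ => hσ (s θ)) hds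

theorem IsPolyOn.fderiv_mul {d₁' d₂' : ℕ}
    (hd₁ : ∀ θ ∈ U, DifferentiableAt ℝ g₁ θ) (hd₂ : ∀ θ ∈ U, DifferentiableAt ℝ g₂ θ)
    (h₁ : IsPolyOn U c d₁ g₁) (h₁' : IsPolyOn U c d₁' fun θ => fderiv ℝ g₁ θ (Pi.single j 1))
    (h₂ : IsPolyOn U c d₂ g₂) (h₂' : IsPolyOn U c d₂' fun θ => fderiv ℝ g₂ θ (Pi.single j 1))
    (hle₁ : d₁ + d₂' ≤ d) (hle₂ : d₂ + d₁' ≤ d) :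
    IsPolyOn U c d fun θ => fderiv ℝ (fun θ => g₁ θ * g₂ θ) θ (Pi.single j 1) :=
  (((h₁.mul h₂').mono hle₁).add ((h₂.mul h₁').mono hle₂)).congr fun θ hθ => by
    rw [fderiv_fun_mul (hd₁ θ hθ) (hd₂ θ hθ)]
    simp

theorem isPolyOn_fderiv_sum {A : Type*} (s : Finset A) {g : A → (ι → ℝ) → ℝ}
    (hd : ∀ a ∈ s, ∀ θ ∈ U, DifferentiableAt ℝ (g a) θ)
    (hg : ∀ a ∈ s, IsPolyOn U c d fun θ => fderiv ℝ (g a) θ (Pi.single j 1)) :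
    IsPolyOn U c d fun θ => fderiv ℝ (fun θ => ∑ a ∈ s, g a θ) θ (Pi.single j 1) :=
  (isPolyOn_sum s hg).congr fun θ hθ => by
    rw [fderiv_fun_sum fun a ha => hd a ha θ hθ]
    simp

end Derivatives

end IsPolyOn

section PfaffianChain

variable {ι : Type} [Fintype ι] [DecidableEq ι] {U : Set (ι → ℝ)} {m K α β : ℕ}

theorem isPfaffianChain_flatten (hU : IsOpen U) (hα : 1 ≤ α) {f : Fin m → Fin K → (ι → ℝ) → ℝ}
    (hf : ∀ p, IsPfaffianChain K α U (f p)) :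
    IsPfaffianChain (m * K) α U
      fun i => f (finProdFinEquiv.symm i).1 (finProdFinEquiv.symm i).2 := by
  refine ⟨hU, hα, fun i => (hf _).2.2.1 _, fun i j => ?_⟩
  obtain ⟨⟨p, r⟩, rfl⟩ := finProdFinEquiv.surjective i
  have hr : IsPolyOn U (fun k : Fin (r.1 + 1) => f p (Fin.castLE r.isLt k)) α
      fun θ => fderiv ℝ (f p r) θ (Pi.single j 1) := (hf p).2.2.2 r j
  simp only [Equiv.symm_apply_apply]
  refine hr.reindex (fun k : Fin (r.1 + 1) => ⟨k + K * p, by have := k.isLt; simp; omega⟩)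
    fun k θ _ => ?_
  have hk : finProdFinEquiv (p, Fin.castLE r.isLt k) =
      ⟨k + K * p, (finProdFinEquiv (p, Fin.castLE r.isLt k)).isLt⟩ := rfl
  simp only [Fin.castLE_mk, ← hk, Equiv.symm_apply_apply]

theorem isPfaffianWithFormat_sum (hU : IsOpen U) (hα : 1 ≤ α)
    {f : Fin m → Fin K → (ι → ℝ) → ℝ} (hf : ∀ p, IsPfaffianChain K α U (f p))
    {g : Fin m → (ι → ℝ) → ℝ} (hg : ∀ p, IsPolyOn U (f p) β (g p)) :
    IsPfaffianWithFormat U (fun θ => ∑ p, g p θ) α β (m * K) :=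
  ⟨_, isPfaffianChain_flatten hU hα hf, isPolyOn_sum _ fun p _ =>
    (hg p).reindex (fun r => finProdFinEquiv (p, r)) fun r θ _ => by simp⟩

end PfaffianChain

namespace Real

theorem hasDerivAt_tanh (t : ℝ) : HasDerivAt tanh (1 - tanh t ^ 2) t := by
  have hc := (cosh_pos t).ne'
  have h := (hasDerivAt_sinh t).fun_div (hasDerivAt_cosh t) hc
  rw [tanh_eq_sinh_div_cosh,
    show tanh = fun y => sinh y / cosh y from funext tanh_eq_sinh_div_cosh]
  exact h.congr_deriv (by field_simp)

theorem analyticAt_tanh {t : ℝ} : AnalyticAt ℝ tanh t := by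
  rw [funext tanh_eq_sinh_div_cosh]
  exact analyticAt_sinh.div analyticAt_cosh (cosh_pos t).ne'

end Real

theorem logisticFn_eq_sigmoid : logisticFn = Real.sigmoid :=
  funext fun _ => one_div _

open Real in
/-- The inverses are there to make the derivatives of the two logarithms polynomial. -/
def bceChain : ℕ → ℝ → ℝ
  | 0 => tanh
  | 1 => fun t => (tanh t)⁻¹
  | 2 => fun t => (1 - tanh t)⁻¹
  | 3 => fun t => log (tanh t)
  | _ => fun t => log (1 - tanh t)

open Real in
theorem analyticAt_bceChain (k : ℕ) {t : ℝ} (ht : 0 < tanh t) :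
    AnalyticAt ℝ (bceChain k) t := by
  have h1 : 0 < 1 - tanh t := sub_pos.2 (tanh_lt_one t)
  match k with
  | 0 => exact analyticAt_tanh
  | 1 => exact analyticAt_tanh.inv ht.ne'
  | 2 => exact (analyticAt_const.sub analyticAt_tanh).inv h1.ne'
  | 3 => exact analyticAt_tanh.log ht
  | _ + 4 => exact (analyticAt_const.sub analyticAt_tanh).log h1

section BCEChain

open Real

variable {ι : Type} [Fintype ι] [DecidableEq ι] {U : Set (ι → ℝ)}

theorem isPolyOn_fderiv_bceChain {H d k : ℕ} (hk : k < 5) (j : ι) {c : ℕ → (ι → ℝ) → ℝ}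
    {s : (ι → ℝ) → ℝ} (hs : ∀ θ ∈ U, DifferentiableAt ℝ s θ) (hpos : ∀ θ ∈ U, 0 < tanh (s θ))
    (hc : ∀ i < 5, ∀ θ ∈ U, c (H + i) θ = bceChain i (s θ))
    (hds : IsPolyOn U (fun q : Fin H => c q) d fun θ => fderiv ℝ s θ (Pi.single j 1)) :
    IsPolyOn U (fun q : Fin (H + k + 1) => c q) (2 + d)
      fun θ => fderiv ℝ (fun θ => bceChain k (s θ)) θ (Pi.single j 1) := by
  have hds' : IsPolyOn U (fun q : Fin (H + k + 1) => c q) d _ :=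
    hds.reindex (Fin.castLE (by omega)) fun _ _ _ => rfl
  have hcU : ∀ i < 5, i ≤ k → IsPolyOn U (fun q : Fin (H + k + 1) => c q) 1
      fun θ => bceChain i (s θ) := fun i hi hik =>
    (isPolyOn_apply ⟨H + i, by omega⟩).congr (hc i hi)
  have hu := hcU 0 (by norm_num) (Nat.zero_le k)
  have h1 : ∀ θ ∈ U, 1 - tanh (s θ) ≠ 0 := fun θ _ => (sub_pos.2 (tanh_lt_one _)).ne'
  match k, hk with
  | 0, _ =>
    refine ((isPolyOn_const 1).sub (hu.mul hu)).fderiv_comp j hs (fun θ _ => ?_) hds'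
    exact (hasDerivAt_tanh _).congr_deriv (by simp [bceChain]; ring)
  | 1, _ =>
    have hv := hcU 1 (by norm_num) le_rfl
    refine ((isPolyOn_const 1).sub (hv.mul hv)).fderiv_comp j hs (fun θ hθ => ?_) hds'
    have := (hpos θ hθ).ne'
    exact ((hasDerivAt_tanh _).inv this).congr_deriv (by simp [bceChain]; field_simp)
  | 2, _ =>
    have hw := hcU 2 (by norm_num) le_rfl
    refine (((isPolyOn_const 1).add hu).mul hw).fderiv_comp j hs (fun θ hθ => ?_) hds'
    have := h1 θ hθ
    exact (((hasDerivAt_tanh _).const_sub 1).inv this).congr_deriv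
      (by simp [bceChain]; field_simp; ring)
  | 3, _ =>
    have hv := hcU 1 (by norm_num) (by norm_num)
    refine (hv.sub hu).fderiv_comp j hs (fun θ hθ => ?_) hds' |>.mono (by omega)
    have := (hpos θ hθ).ne'
    exact ((hasDerivAt_tanh _).log this).congr_deriv (by simp [bceChain]; field_simp)
  | 4, _ =>
    refine ((isPolyOn_const 1).add hu).const_mul (-1) |>.fderiv_comp j hs (fun θ hθ => ?_) hds'
      |>.mono (by omega)
    have := h1 θ hθ
    exact (((hasDerivAt_tanh _).const_sub 1).log this).congr_deriv
      (by simp [bceChain]; field_simp; ring)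

end BCEChain

section Network

variable {L : ℕ} {n : ℕ → ℕ} {σ : ℝ → ℝ} (xp : Fin (n 0) → ℝ) {U : Set (ParamIdx L n → ℝ)}
  {κ : Type*} {c : κ → (ParamIdx L n → ℝ) → ℝ}

theorem analyticAt_netWeight (l : ℕ) (j : Fin (n (l + 1))) (i : Fin (n l + 1))
    (θ : ParamIdx L n → ℝ) : AnalyticAt ℝ (fun θ : ParamIdx L n → ℝ => netWeight θ l j i) θ := by
  unfold netWeight
  split_ifs
  · exact (ContinuousLinearMap.proj (R := ℝ) (φ := fun _ : ParamIdx L n => ℝ) _).analyticAt θ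
  · exact analyticAt_const

theorem fderiv_netWeight (l : ℕ) (j : Fin (n (l + 1))) (i : Fin (n l + 1))
    (θ v : ParamIdx L n → ℝ) :
    fderiv ℝ (fun θ : ParamIdx L n → ℝ => netWeight θ l j i) θ v = netWeight v l j i := by
  unfold netWeight
  split_ifs
  · rw [(hasFDerivAt_apply _ θ).fderiv]
    rfl
  · simp

theorem isPolyOn_netWeight (l : ℕ) (j : Fin (n (l + 1))) (i : Fin (n l + 1)) :
    IsPolyOn U c 1 fun θ => netWeight θ l j i := by
  unfold netWeight
  split_ifs
  · exact isPolyOn_coord _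
  · exact isPolyOn_const 0

theorem netZ_zero (θ : ParamIdx L n → ℝ) : netZ σ θ xp 0 = Fin.cons 1 xp := rfl

theorem netZ_succ_zero (θ : ParamIdx L n → ℝ) (t : ℕ) : netZ σ θ xp (t + 1) 0 = 1 := rfl

theorem netZ_succ_succ (θ : ParamIdx L n → ℝ) (t : ℕ) (j : Fin (n (t + 1))) :
    netZ σ θ xp (t + 1) j.succ = σ (netPreact σ θ xp t j) := by
  simp only [netZ, Fin.cons_succ, netPreact]

theorem analyticAt_netZ (hσ : ∀ t, AnalyticAt ℝ σ t) (t : ℕ) (i : Fin (n t + 1))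
    (θ : ParamIdx L n → ℝ) : AnalyticAt ℝ (fun θ => netZ σ θ xp t i) θ := by
  induction t generalizing θ with
  | zero => exact analyticAt_const
  | succ t ih =>
    refine Fin.cases analyticAt_const (fun j => ?_) i
    simp only [netZ_succ_succ, netPreact]
    exact (hσ _).comp (Finset.analyticAt_fun_sum _ fun i _ =>
      (analyticAt_netWeight t j i θ).mul (ih i θ))

theorem analyticAt_netPreact (hσ : ∀ t, AnalyticAt ℝ σ t) (t : ℕ) (j : Fin (n (t + 1)))
    (θ : ParamIdx L n → ℝ) : AnalyticAt ℝ (fun θ => netPreact σ θ xp t j) θ :=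
  Finset.analyticAt_fun_sum _ fun i _ =>
    (analyticAt_netWeight t j i θ).mul (analyticAt_netZ xp hσ t i θ)

theorem analyticAt_netOutLin (hσ : ∀ t, AnalyticAt ℝ σ t) (θ : ParamIdx L n → ℝ) :
    AnalyticAt ℝ (fun θ => netOutLin σ θ xp) θ :=
  Finset.analyticAt_fun_sum _ fun j _ => analyticAt_netPreact xp hσ _ j θ

def hiddenActs (σ : ℝ → ℝ) (xp : Fin (n 0) → ℝ) (t : ℕ) :
    (Σ s : Fin t, Fin (n (s.1 + 1))) → (ParamIdx L n → ℝ) → ℝ :=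
  fun q θ => σ (netPreact σ θ xp q.1 q.2)

theorem isPolyOn_netZ (t : ℕ) (i : Fin (n t + 1)) :
    IsPolyOn U (hiddenActs σ xp t) 1 fun θ => netZ σ θ xp t i := by
  cases t with
  | zero => exact isPolyOn_const _
  | succ t =>
    refine Fin.cases (isPolyOn_const 1) (fun j => ?_) i
    simp only [netZ_succ_succ]
    exact isPolyOn_apply (c := hiddenActs σ xp (t + 1)) ⟨Fin.last t, j⟩

theorem isPolyOn_fderiv_netPreact_of_netZ (hσ : ∀ t, AnalyticAt ℝ σ t) {t d : ℕ}
    (j : Fin (n (t + 1))) (k : ParamIdx L n)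
    (hz : ∀ i, IsPolyOn U (hiddenActs σ xp t) d
      fun θ => fderiv ℝ (fun θ => netZ σ θ xp t i) θ (Pi.single k 1)) :
    IsPolyOn U (hiddenActs σ xp t) (d + 1)
      fun θ => fderiv ℝ (fun θ => netPreact σ θ xp t j) θ (Pi.single k 1) :=
  isPolyOn_fderiv_sum k _
    (fun i _ θ _ =>
      ((analyticAt_netWeight t j i θ).mul (analyticAt_netZ xp hσ t i θ)).differentiableAt)
    fun i _ => IsPolyOn.fderiv_mul k (fun θ _ => (analyticAt_netWeight t j i θ).differentiableAt)
      (fun θ _ => (analyticAt_netZ xp hσ t i θ).differentiableAt) (isPolyOn_netWeight t j i)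
      ((isPolyOn_const (d := 0) _).congr fun θ _ => (fderiv_netWeight t j i θ _).symm)
      (isPolyOn_netZ xp t i) (hz i) (by omega) (by omega)

theorem isPolyOn_fderiv_netZ {A B C : ℝ} (hσ : ∀ t, AnalyticAt ℝ σ t)
    (hσ' : ∀ t, HasDerivAt σ (A + B * σ t + C * σ t ^ 2) t) (k : ParamIdx L n) (t : ℕ)
    (i : Fin (n t + 1)) :
    IsPolyOn U (hiddenActs σ xp t) (3 * t)
      fun θ => fderiv ℝ (fun θ => netZ σ θ xp t i) θ (Pi.single k 1) := by
  induction t with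
  | zero =>
    exact (isPolyOn_const 0).congr fun θ _ => by
      simp only [netZ_zero, fderiv_fun_const, Pi.zero_apply, zero_apply]
  | succ t ih =>
    refine Fin.cases ((isPolyOn_const 0).congr fun θ _ => by
      simp only [netZ_succ_zero, fderiv_fun_const, Pi.zero_apply, zero_apply])
      (fun j => ?_) i
    simp only [netZ_succ_succ]
    have hds : IsPolyOn U (hiddenActs σ xp (t + 1)) (3 * t + 1)
        fun θ => fderiv ℝ (fun θ => netPreact σ θ xp t j) θ (Pi.single k 1) :=
      (isPolyOn_fderiv_netPreact_of_netZ xp hσ j k ih).reindex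
        (fun q => ⟨q.1.castSucc, q.2⟩) fun q θ _ => by obtain ⟨s, i⟩ := q; rfl
    exact (IsPolyOn.fderiv_comp_riccati k hσ'
      (fun θ _ => (analyticAt_netPreact xp hσ t j θ).differentiableAt)
      (isPolyOn_apply (c := hiddenActs σ xp (t + 1)) ⟨Fin.last t, j⟩) hds).mono (by omega)

theorem isPolyOn_fderiv_netPreact {A B C : ℝ} (hσ : ∀ t, AnalyticAt ℝ σ t)
    (hσ' : ∀ t, HasDerivAt σ (A + B * σ t + C * σ t ^ 2) t) (k : ParamIdx L n) (t : ℕ)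
    (j : Fin (n (t + 1))) :
    IsPolyOn U (hiddenActs σ xp t) (3 * t + 1)
      fun θ => fderiv ℝ (fun θ => netPreact σ θ xp t j) θ (Pi.single k 1) :=
  isPolyOn_fderiv_netPreact_of_netZ xp hσ j k (isPolyOn_fderiv_netZ xp hσ hσ' k t)

theorem isPolyOn_fderiv_netOutLin {A B C : ℝ} (hσ : ∀ t, AnalyticAt ℝ σ t)
    (hσ' : ∀ t, HasDerivAt σ (A + B * σ t + C * σ t ^ 2) t) (k : ParamIdx L n) :
    IsPolyOn U (hiddenActs σ xp (L - 1)) (3 * (L - 1) + 1)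
      fun θ => fderiv ℝ (fun θ => netOutLin σ θ xp) θ (Pi.single k 1) :=
  isPolyOn_fderiv_sum k _ (fun j _ θ _ => (analyticAt_netPreact xp hσ _ j θ).differentiableAt)
    fun j _ => isPolyOn_fderiv_netPreact xp hσ hσ' k _ j

end Network

section PointChain

open Real

variable {L h : ℕ} {n : ℕ → ℕ} {σ : ℝ → ℝ} (xp : Fin (n 0) → ℝ) {U : Set (ParamIdx L n → ℝ)}

/-- The Pfaffian chain of one data point `xp` when the hidden layers have width `h`: index
`s * h + i` holds the hidden activation `σ (a^{s+1}_i)`, and the last five indices hold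
`bceChain` at `a^L`. The width test in the condition always passes when the hidden widths
are `h`. -/
def pointChain (σ : ℝ → ℝ) (xp : Fin (n 0) → ℝ) (h r : ℕ) (θ : ParamIdx L n → ℝ) : ℝ :=
  if hr : r < (L - 1) * h ∧ r % h < n (r / h + 1) then
    σ (netPreact σ θ xp (r / h) ⟨r % h, hr.2⟩)
  else bceChain (r - (L - 1) * h) (netOutLin σ θ xp)

theorem pointChain_mul_add (hhid : ∀ l : ℕ, 1 ≤ l → l ≤ L - 1 → n l = h) {s : ℕ}
    (hs : s < L - 1) (j : Fin (n (s + 1))) :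
    pointChain σ xp h (s * h + j) = fun θ : ParamIdx L n → ℝ => σ (netPreact σ θ xp s j) := by
  have hj : (j : ℕ) < h := hhid (s + 1) (by omega) (by omega) ▸ j.isLt
  have hdiv : (s * h + j) / h = s := by
    rw [add_comm, Nat.add_mul_div_right _ _ (by omega), Nat.div_eq_of_lt hj, zero_add]
  have hmod : (s * h + j) % h = j := by
    rw [add_comm, Nat.add_mul_mod_self_right, Nat.mod_eq_of_lt hj]
  have hlt : s * h + j < (L - 1) * h :=
    calc s * h + j < (s + 1) * h := by rw [add_one_mul]; omega
      _ ≤ (L - 1) * h := Nat.mul_le_mul_right h hs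
  have key : ∀ t i, t = s → i = (j : ℕ) → ∀ (hin : i < n (t + 1)) (θ : ParamIdx L n → ℝ),
      netPreact σ θ xp t ⟨i, hin⟩ = netPreact σ θ xp s j := by
    rintro t i rfl rfl _ _
    rfl
  funext θ
  rw [pointChain, dif_pos ⟨hlt, by rw [hmod, hdiv]; exact j.isLt⟩, key _ _ hdiv hmod]

theorem pointChain_add (k : ℕ) :
    pointChain σ xp h ((L - 1) * h + k) =
      fun θ : ParamIdx L n → ℝ => bceChain k (netOutLin σ θ xp) := by
  funext θ
  rw [pointChain, dif_neg (by omega), Nat.add_sub_cancel_left]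

theorem analyticAt_pointChain (hσ : ∀ t, AnalyticAt ℝ σ t) (r : ℕ) {θ : ParamIdx L n → ℝ}
    (hθ : 0 < tanh (netOutLin σ θ xp)) : AnalyticAt ℝ (pointChain σ xp h r) θ := by
  unfold pointChain
  split_ifs
  · exact (hσ _).comp (analyticAt_netPreact xp hσ _ _ θ)
  · exact (analyticAt_bceChain _ hθ).comp (f := fun θ => netOutLin σ θ xp)
      (analyticAt_netOutLin xp hσ θ)

theorem IsPolyOn.pointChain_of_hiddenActs (hhid : ∀ l : ℕ, 1 ≤ l → l ≤ L - 1 → n l = h)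
    {t N d : ℕ} (ht : t ≤ L - 1) (hN : t * h ≤ N) {g : (ParamIdx L n → ℝ) → ℝ}
    (hg : IsPolyOn U (hiddenActs σ xp t) d g) :
    IsPolyOn U (fun q : Fin N => pointChain σ xp h q) d g := by
  refine hg.reindex (fun q => ⟨q.1 * h + q.2, ?_⟩) fun q θ _ => ?_
  · have hq : (q.2 : ℕ) < h := hhid (q.1 + 1) (by omega) (by omega) ▸ q.2.isLt
    calc q.1 * h + q.2 < (q.1 + 1) * h := by rw [add_one_mul]; omega
      _ ≤ t * h := Nat.mul_le_mul_right h q.1.isLt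
      _ ≤ N := hN
  · exact (congrFun (pointChain_mul_add xp hhid (by omega) q.2) θ).symm

theorem isPolyOn_fderiv_pointChain (hhid : ∀ l : ℕ, 1 ≤ l → l ≤ L - 1 → n l = h)
    {A B C : ℝ} (hσ : ∀ t, AnalyticAt ℝ σ t)
    (hσ' : ∀ t, HasDerivAt σ (A + B * σ t + C * σ t ^ 2) t)
    (hpos : ∀ θ ∈ U, 0 < tanh (netOutLin σ θ xp)) {r : ℕ} (hr : r < (L - 1) * h + 5)
    (k : ParamIdx L n) :
    IsPolyOn U (fun q : Fin (r + 1) => pointChain σ xp h q) (3 * (L - 2) + 7)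
      fun θ => fderiv ℝ (pointChain σ xp h r) θ (Pi.single k 1) := by
  by_cases hH : r < (L - 1) * h
  · have hh : 0 < h := Nat.pos_of_ne_zero fun h0 => by simp [h0] at hH
    obtain ⟨s, j, hjh, rfl⟩ : ∃ s j, j < h ∧ r = s * h + j :=
      ⟨r / h, r % h, Nat.mod_lt r hh, by rw [mul_comm]; exact (Nat.div_add_mod r h).symm⟩
    have hs : s < L - 1 := by
      by_contra! hs
      have := Nat.mul_le_mul_right h hs
      omega
    have hwidth : h = n (s + 1) := (hhid (s + 1) (by omega) (by omega)).symm
    have hchain := pointChain_mul_add (σ := σ) xp hhid hs ⟨j, hwidth ▸ hjh⟩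
    have hds := (isPolyOn_fderiv_netPreact xp hσ hσ' k s ⟨j, hwidth ▸ hjh⟩
      ).pointChain_of_hiddenActs xp hhid (U := U) (N := s * h + j + 1) (by omega) (by omega)
    rw [hchain]
    exact (IsPolyOn.fderiv_comp_riccati k hσ'
      (fun θ _ => (analyticAt_netPreact xp hσ _ _ θ).differentiableAt)
      ((isPolyOn_apply ⟨s * h + j, by omega⟩).congr fun θ _ => congrFun hchain θ) hds).mono
      (by omega)
  · obtain ⟨i, hi, rfl⟩ : ∃ i < 5, r = (L - 1) * h + i := ⟨r - (L - 1) * h, by omega, by omega⟩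
    have hds := (isPolyOn_fderiv_netOutLin xp hσ hσ' k).pointChain_of_hiddenActs xp hhid
      (U := U) le_rfl le_rfl
    rw [pointChain_add]
    exact (isPolyOn_fderiv_bceChain hi k
      (fun θ _ => (analyticAt_netOutLin xp hσ θ).differentiableAt) hpos
      (fun i _ θ _ => congrFun (pointChain_add xp i) θ) hds).mono (by omega)

theorem isPfaffianChain_pointChain (hhid : ∀ l : ℕ, 1 ≤ l → l ≤ L - 1 → n l = h)
    {A B C : ℝ} (hσ : ∀ t, AnalyticAt ℝ σ t)
    (hσ' : ∀ t, HasDerivAt σ (A + B * σ t + C * σ t ^ 2) t) (hU : IsOpen U)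
    (hpos : ∀ θ ∈ U, 0 < tanh (netOutLin σ θ xp)) :
    IsPfaffianChain ((L - 1) * h + 5) (3 * (L - 2) + 7) U fun r => pointChain σ xp h r :=
  ⟨hU, by omega, fun _ θ hθ => analyticAt_pointChain xp hσ _ (hpos θ hθ),
    fun r k => isPolyOn_fderiv_pointChain xp hhid hσ hσ' hpos r.isLt k⟩

theorem isPolyOn_bce_pointChain (y : ℝ) :
    IsPolyOn U (fun r : Fin ((L - 1) * h + 5) => pointChain σ xp h r) 1 fun θ =>
      -y * log (tanh (netOutLin σ θ xp)) - (1 - y) * log (1 - tanh (netOutLin σ θ xp)) :=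
  (((isPolyOn_apply ⟨(L - 1) * h + 3, by omega⟩).const_mul (-y)).sub
    ((isPolyOn_apply ⟨(L - 1) * h + 4, by omega⟩).const_mul (1 - y))).congr fun θ _ => by
    simp only [pointChain_add]
    rfl

end PointChain

theorem statement7_general (L : ℕ) (h : ℕ) (n : ℕ → ℕ)
    (hhid : ∀ l : ℕ, 1 ≤ l → l ≤ L - 1 → n l = h)
    (σ : ℝ → ℝ) (hσ : σ = Real.tanh ∨ σ = logisticFn)
    (m : ℕ) (x : Fin m → Fin (n 0) → ℝ) (y : Fin m → ℝ) :
    IsPfaffianWithFormat (ι := ParamIdx L n)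
      {θ : ParamIdx L n → ℝ | ∀ p : Fin m, Real.tanh (netOutLin σ θ (x p)) ∈ Set.Ioo (0 : ℝ) 1}
      (fun θ => ∑ p, (-(y p) * Real.log (Real.tanh (netOutLin σ θ (x p))) -
        (1 - y p) * Real.log (1 - Real.tanh (netOutLin σ θ (x p)))))
      (3 * (L - 2) + 7) 1 (m * ((L - 1) * h + 5)) := by
  obtain ⟨A, B, C, hσ'⟩ : ∃ A B C : ℝ, ∀ t, HasDerivAt σ (A + B * σ t + C * σ t ^ 2) t := by
    rcases hσ with rfl | rfl
    · exact ⟨1, 0, -1, fun t => (Real.hasDerivAt_tanh t).congr_deriv (by ring)⟩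
    · rw [logisticFn_eq_sigmoid]
      exact ⟨0, 1, -1, fun t => (Real.hasDerivAt_sigmoid t).congr_deriv (by ring)⟩
  have hσa : ∀ t, AnalyticAt ℝ σ t := by
    rcases hσ with rfl | rfl
    · exact fun _ => Real.analyticAt_tanh
    · exact fun _ => logisticFn_eq_sigmoid ▸ analyticAt_sigmoid
  have hU : IsOpen {θ : ParamIdx L n → ℝ |
      ∀ p : Fin m, Real.tanh (netOutLin σ θ (x p)) ∈ Set.Ioo (0 : ℝ) 1} := by
    simp only [Set.ofPred_forall]
    exact isOpen_iInter_of_finite fun p => isOpen_Ioo.preimage <| continuous_iff_continuousAt.2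
      fun θ => (Real.analyticAt_tanh.comp (analyticAt_netOutLin (x p) hσa θ)).continuousAt
  exact isPfaffianWithFormat_sum hU (by omega)
    (fun p => isPfaffianChain_pointChain (x p) hhid hσa hσ' hU fun θ hθ => (hθ p).1)
    fun p => isPolyOn_bce_pointChain (x p) (y p)

/-- For a feedforward network with `L ≥ 2` layers, all hidden layers of
width `h`, hidden activation `tanh` or the logistic sigmoid, and last-layer output
`tanh(a^L)`, the BCE empirical risk on a dataset of `m` points, restricted to the open set
of parameters where all network outputs lie in `(0,1)`, is a Pfaffian function of format
`(3(L−2)+7, 1, m((L−1)h+5))`. -/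
theorem statement7 (L : ℕ) (hL : 2 ≤ L) (h : ℕ) (n : ℕ → ℕ)
    (hhid : ∀ l : ℕ, 1 ≤ l → l ≤ L - 1 → n l = h) (hout : n L = 1)
    (σ : ℝ → ℝ) (hσ : σ = Real.tanh ∨ σ = logisticFn)
    (m : ℕ) (x : Fin m → Fin (n 0) → ℝ) (y : Fin m → ℝ) :
    IsPfaffianWithFormat (ι := ParamIdx L n)
      {θ : ParamIdx L n → ℝ | ∀ p : Fin m, Real.tanh (netOutLin σ θ (x p)) ∈ Set.Ioo (0 : ℝ) 1}
      (fun θ => ∑ p, (-(y p) * Real.log (Real.tanh (netOutLin σ θ (x p))) -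
        (1 - y p) * Real.log (1 - Real.tanh (netOutLin σ θ (x p)))))
      (3 * (L - 2) + 7) 1 (m * ((L - 1) * h + 5)) :=
  statement7_general L h n hhid σ hσ m x y
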